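/- Let Φ(x, y) := 1/(4π‖x − y‖) for x ≠ y in ℝ³. For q ∈ ℝ², write q̂ := (q₁, q₂, 0) ∈ ℝ³. Let q₊, q₋ ∈ ℝ² be distinct, let h > 0 and R > 0 with 2h < R, and define v^h(x) := (1/(πh²))·(∫_{B(q₊,h)} Φ(x, ŷ) dy − ∫_{B(q₋,h)} Φ(x, ŷ) dy) and v(x) := Φ(x, q̂₊) − Φ(x, q̂₋). Let Ξ_R := {x ∈ ℝ³ : x₃ < 0, ‖x − q̂₊‖ > R, ‖x − q̂₋‖ > R}. Then (∫_{Ξ_R} |v^h(x) − v(x)|² dx)^{1/2} ≤ 2h/√R. -/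

import Mathlib

open Real MeasureTheory Metric

noncomputable section

/-- Embedding of a boundary point `q ∈ ℝ²` into the boundary plane `{x₃ = 0}`
of the lower half-space in `ℝ³`. -/
def hat (q : EuclideanSpace ℝ (Fin 2)) : EuclideanSpace ℝ (Fin 3) :=
  WithLp.toLp 2 ![q 0, q 1, 0]

/-- The fundamental solution of the Laplace equation in three dimensions. -/
def Phi (x y : EuclideanSpace ℝ (Fin 3)) : ℝ := 1 / (4 * Real.pi * ‖x - y‖)

lemma hat_sub_norm (y q : EuclideanSpace ℝ (Fin 2)) : ‖hat y - hat q‖ = ‖y - q‖ := by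
  rw [EuclideanSpace.norm_eq, EuclideanSpace.norm_eq]
  simp [hat, Fin.sum_univ_three, Fin.sum_univ_two, PiLp.sub_apply]

lemma continuous_hat : Continuous hat := by
  have h1 : Continuous fun q : EuclideanSpace ℝ (Fin 2) => (![q 0, q 1, 0] : Fin 3 → ℝ) := by
    refine continuous_pi fun i => ?_
    fin_cases i
    · simpa using (EuclideanSpace.proj (0 : Fin 2)).continuous
    · simpa using (EuclideanSpace.proj (1 : Fin 2)).continuous
    · simpa using continuous_const
  exact (PiLp.continuous_toLp (p := 2) (β := fun _ : Fin 3 => ℝ)).comp h1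

lemma ball2_vol (q : EuclideanSpace ℝ (Fin 2)) (h : ℝ) (hh : 0 ≤ h) :
    (volume (ball q h)).toReal = π * h ^ 2 := by
  rw [EuclideanSpace.volume_ball]
  simp only [Fintype.card_fin]
  rw [show ((2:ℕ):ℝ)/2 + 1 = 2 by norm_num, Real.Gamma_two]
  rw [ENNReal.toReal_mul, ENNReal.toReal_pow, ENNReal.toReal_ofReal hh,
    ENNReal.toReal_ofReal (by positivity)]
  rw [div_one, Real.sq_sqrt pi_nonneg]
  ring

lemma ball3_vol : (volume (ball (0 : EuclideanSpace ℝ (Fin 3)) 1)).toReal = 4 * π / 3 := by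
  rw [EuclideanSpace.volume_ball]
  simp only [Fintype.card_fin]
  rw [show ((3:ℕ):ℝ)/2 + 1 = 3/2 + 1 by norm_num, Real.Gamma_add_one (by norm_num),
    show (3:ℝ)/2 = 1/2 + 1 by norm_num, Real.Gamma_add_one (by norm_num), Real.Gamma_one_half_eq]
  rw [ENNReal.toReal_mul, ENNReal.toReal_pow, ENNReal.toReal_ofReal (by norm_num),
    ENNReal.toReal_ofReal (by positivity)]
  have hs : Real.sqrt π ≠ 0 := by positivity
  have h3 : Real.sqrt π ^ 3 = π * Real.sqrt π := by
    rw [pow_succ, Real.sq_sqrt pi_nonneg]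
  rw [one_pow, one_mul, h3]
  field_simp
  ring

lemma single_bound (x : EuclideanSpace ℝ (Fin 3)) (q : EuclideanSpace ℝ (Fin 2))
    (h R : ℝ) (hh : 0 < h) (hR : 2 * h < R) (hx : R < ‖x - hat q‖) :
    |(1 / (π * h ^ 2)) * (∫ y in ball q h, Phi x (hat y)) - Phi x (hat q)|
      ≤ h / (2 * π * ‖x - hat q‖ ^ 2) := by
  have hπ : (0:ℝ) < π := pi_pos
  set b : ℝ := ‖x - hat q‖ with hb
  have hbpos : 0 < b := lt_trans (by linarith) hx
  have hhb : h < b / 2 := by linarith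
  have hlow : ∀ y ∈ closedBall q h, b - h ≤ ‖x - hat y‖ := by
    intro y hy
    have h1 : b - ‖x - hat y‖ ≤ ‖hat y - hat q‖ := by
      have h2 := norm_sub_norm_le (x - hat q) (x - hat y)
      have h3 : (x - hat q) - (x - hat y) = hat y - hat q := by abel
      rwa [h3] at h2
    have h4 : ‖hat y - hat q‖ ≤ h := by
      rw [hat_sub_norm]; simpa [dist_eq_norm] using mem_closedBall.1 hy
    linarith
  have hposa : ∀ y ∈ closedBall q h, 0 < ‖x - hat y‖ := fun y hy =>
    lt_of_lt_of_le (by linarith) (hlow y hy)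
  have key : ∀ y ∈ closedBall q h, |Phi x (hat y) - Phi x (hat q)| ≤ h / (2 * π * b ^ 2) := by
    intro y hy
    set a : ℝ := ‖x - hat y‖ with ha
    have hapos : 0 < a := hposa y hy
    have halow : b - h ≤ a := hlow y hy
    have hdiff : Phi x (hat y) - Phi x (hat q) = (b - a) / (4 * π * a * b) := by
      simp only [Phi, ← hb, ← ha]
      field_simp
    have hba : |b - a| ≤ h := by
      have h1 := abs_norm_sub_norm_le (x - hat q) (x - hat y)
      have h3 : (x - hat q) - (x - hat y) = hat y - hat q := by abel
      rw [h3, hat_sub_norm] at h1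
      have h4 : ‖y - q‖ ≤ h := by simpa [dist_eq_norm] using mem_closedBall.1 hy
      exact le_trans h1 h4
    rw [hdiff, abs_div, abs_of_pos (by positivity : (0:ℝ) < 4 * π * a * b)]
    have h2a : b ≤ 2 * a := by linarith
    have := mul_le_mul_of_nonneg_left h2a (show (0:ℝ) ≤ 2 * π * b by positivity)
    exact div_le_div₀ hh.le hba (by positivity) (by nlinarith)
  have hcont : ContinuousOn (fun y => Phi x (hat y)) (closedBall q h) := by
    apply ContinuousOn.div continuousOn_const
    · exact ((continuous_const.mul ((continuous_const.sub continuous_hat).norm))).continuousOn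
    · intro y hy
      have := hposa y hy
      positivity
  have hint : IntegrableOn (fun y => Phi x (hat y)) (ball q h) :=
    (hcont.integrableOn_compact (isCompact_closedBall q h)).mono_set ball_subset_closedBall
  have hconst : IntegrableOn (fun _ => Phi x (hat q)) (ball q h) :=
    integrableOn_const measure_ball_lt_top.ne
  have hvol := ball2_vol q h hh.le
  have hsub : (∫ y in ball q h, (Phi x (hat y) - Phi x (hat q)))
      = (∫ y in ball q h, Phi x (hat y)) - π * h ^ 2 * Phi x (hat q) := by
    rw [integral_sub hint hconst, setIntegral_const, measureReal_def, hvol, smul_eq_mul]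
  have hbound : ‖∫ y in ball q h, (Phi x (hat y) - Phi x (hat q))‖
      ≤ (h / (2 * π * b ^ 2)) * (π * h ^ 2) := by
    have := norm_setIntegral_le_of_norm_le_const (μ := volume) (s := ball q h)
      (f := fun y => Phi x (hat y) - Phi x (hat q)) measure_ball_lt_top
      (fun y hy => by
        rw [Real.norm_eq_abs]
        exact key y (ball_subset_closedBall hy))
    rwa [measureReal_def, hvol] at this
  rw [hsub, Real.norm_eq_abs] at hbound
  have heq : (1 / (π * h ^ 2)) * (∫ y in ball q h, Phi x (hat y)) - Phi x (hat q)
      = (1 / (π * h ^ 2)) * ((∫ y in ball q h, Phi x (hat y)) - π * h ^ 2 * Phi x (hat q)) := by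
    field_simp
  rw [heq, abs_mul, abs_of_pos (by positivity : (0:ℝ) < 1 / (π * h ^ 2))]
  calc (1 / (π * h ^ 2)) * |(∫ y in ball q h, Phi x (hat y)) - π * h ^ 2 * Phi x (hat q)|
      ≤ (1 / (π * h ^ 2)) * ((h / (2 * π * b ^ 2)) * (π * h ^ 2)) := by
        exact mul_le_mul_of_nonneg_left hbound (by positivity)
    _ = h / (2 * π * b ^ 2) := by field_simp

lemma ext_integrable0 (R : ℝ) (hR : 0 < R) :
    IntegrableOn (fun x : EuclideanSpace ℝ (Fin 3) => (‖x‖ ^ 4)⁻¹) {x | R < ‖x‖} := by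
  have hi : Integrable (fun x : EuclideanSpace ℝ (Fin 3) => (1 + ‖x‖) ^ (-(4:ℝ))) :=
    integrable_one_add_norm (by simp [finrank_euclideanSpace]; norm_num)
  have hi' := (hi.const_mul ((1 + R⁻¹) ^ 4)).restrict (s := {x | R < ‖x‖})
  refine Integrable.mono' hi' ?_ ?_
  · exact ((measurable_norm.pow_const 4).inv).aestronglyMeasurable
  · have hmeas : MeasurableSet {x : EuclideanSpace ℝ (Fin 3) | R < ‖x‖} :=
      (isOpen_lt continuous_const continuous_norm).measurableSet
    filter_upwards [ae_restrict_mem hmeas] with x hx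
    have hr : R < ‖x‖ := hx
    have hrpos : 0 < ‖x‖ := hR.trans hr
    have h1 : 1 + ‖x‖ ≤ (1 + R⁻¹) * ‖x‖ := by
      have : 1 ≤ ‖x‖ / R := (one_le_div hR).2 hr.le
      have h2 : ‖x‖ * R⁻¹ = ‖x‖ / R := by rw [div_eq_mul_inv]
      nlinarith [mul_pos hrpos (inv_pos.2 hR)]
    have hpow : (1 + ‖x‖) ^ 4 ≤ (1 + R⁻¹) ^ 4 * ‖x‖ ^ 4 := by
      rw [← mul_pow]; exact pow_le_pow_left₀ (by positivity) h1 4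
    have hrw : (1 + ‖x‖) ^ (-(4:ℝ)) = ((1 + ‖x‖) ^ 4)⁻¹ := by
      rw [Real.rpow_neg (by positivity), show ((4:ℝ)) = ((4:ℕ):ℝ) by norm_num,
        Real.rpow_natCast]
    rw [Real.norm_eq_abs, abs_of_nonneg (by positivity), hrw]
    calc (‖x‖ ^ 4)⁻¹ = (1 + R⁻¹) ^ 4 * ((1 + R⁻¹) ^ 4 * ‖x‖ ^ 4)⁻¹ := by
          field_simp
      _ ≤ (1 + R⁻¹) ^ 4 * ((1 + ‖x‖) ^ 4)⁻¹ := by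
          refine mul_le_mul_of_nonneg_left ?_ (by positivity)
          exact inv_anti₀ (by positivity) hpow

lemma ext_int_val0 (R : ℝ) (hR : 0 < R) :
    ∫ x in {x : EuclideanSpace ℝ (Fin 3) | R < ‖x‖}, (‖x‖ ^ 4)⁻¹ = 4 * π / R := by
  have hmeas : MeasurableSet {x : EuclideanSpace ℝ (Fin 3) | R < ‖x‖} :=
    (isOpen_lt continuous_const continuous_norm).measurableSet
  rw [← integral_indicator hmeas]
  have hfun : (Set.indicator {x : EuclideanSpace ℝ (Fin 3) | R < ‖x‖} fun x => (‖x‖ ^ 4)⁻¹)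
      = fun x => Set.indicator (Set.Ioi R) (fun r => (r ^ 4)⁻¹) ‖x‖ := by
    funext x
    by_cases hx : R < ‖x‖ <;> simp [Set.indicator, hx]
  rw [hfun, MeasureTheory.integral_fun_norm_addHaar volume
    (Set.indicator (Set.Ioi R) (fun r => (r ^ 4)⁻¹))]
  simp only [finrank_euclideanSpace, Fintype.card_fin]
  have h1 : ∀ y : ℝ, y ^ (3 - 1) • Set.indicator (Set.Ioi R) (fun r => (r ^ 4)⁻¹) y
      = Set.indicator (Set.Ioi R) (fun r => r ^ 2 * (r ^ 4)⁻¹) y := by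
    intro y
    by_cases hy : y ∈ Set.Ioi R <;> simp [Set.indicator, hy, smul_eq_mul]
  rw [show (∫ y in Set.Ioi (0:ℝ), y ^ (3 - 1) • Set.indicator (Set.Ioi R) (fun r => (r ^ 4)⁻¹) y)
      = ∫ y in Set.Ioi (0:ℝ), Set.indicator (Set.Ioi R) (fun r => r ^ 2 * (r ^ 4)⁻¹) y by
    exact integral_congr_ae (Filter.Eventually.of_forall fun y => h1 y)]
  rw [setIntegral_indicator measurableSet_Ioi]
  rw [show Set.Ioi (0:ℝ) ∩ Set.Ioi R = Set.Ioi R by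
    rw [Set.Ioi_inter_Ioi, max_eq_right hR.le]]
  rw [setIntegral_congr_fun measurableSet_Ioi
    (g := fun y : ℝ => y ^ (-2:ℝ)) (fun y hy => by
      have hy' : 0 < y := hR.trans hy
      show y ^ 2 * (y ^ 4)⁻¹ = y ^ (-2:ℝ)
      rw [Real.rpow_neg hy'.le, show ((2:ℝ)) = ((2:ℕ):ℝ) by norm_num, Real.rpow_natCast]
      field_simp)]
  rw [integral_Ioi_rpow_of_lt (by norm_num) hR]
  rw [measureReal_def, ball3_vol]
  rw [nsmul_eq_mul, smul_eq_mul]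
  rw [show (-2:ℝ) + 1 = -1 by norm_num, Real.rpow_neg_one]
  field_simp
  ring

lemma ext_int_val (p : EuclideanSpace ℝ (Fin 3)) (R : ℝ) (hR : 0 < R) :
    ∫ x in {x : EuclideanSpace ℝ (Fin 3) | R < ‖x - p‖}, (‖x - p‖ ^ 4)⁻¹ = 4 * π / R := by
  have hmp := measurePreserving_add_right (volume : Measure (EuclideanSpace ℝ (Fin 3))) p
  have hemb : MeasurableEmbedding (fun x : EuclideanSpace ℝ (Fin 3) => x + p) :=
    (Homeomorph.addRight p).measurableEmbedding
  have := hmp.setIntegral_preimage_emb hemb (fun x => (‖x - p‖ ^ 4)⁻¹)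
    {x | R < ‖x - p‖}
  rw [← this]
  rw [show ((fun x : EuclideanSpace ℝ (Fin 3) => x + p) ⁻¹' {x | R < ‖x - p‖})
      = {x | R < ‖x‖} by ext z; simp]
  rw [← ext_int_val0 R hR]
  refine setIntegral_congr_fun ((isOpen_lt continuous_const continuous_norm).measurableSet)
    (fun z _ => by simp)

lemma ext_integrable (p : EuclideanSpace ℝ (Fin 3)) (R : ℝ) (hR : 0 < R) :
    IntegrableOn (fun x : EuclideanSpace ℝ (Fin 3) => (‖x - p‖ ^ 4)⁻¹) {x | R < ‖x - p‖} := by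
  have hmp := measurePreserving_add_right (volume : Measure (EuclideanSpace ℝ (Fin 3))) p
  have hemb : MeasurableEmbedding (fun x : EuclideanSpace ℝ (Fin 3) => x + p) :=
    (Homeomorph.addRight p).measurableEmbedding
  refine (hmp.integrableOn_comp_preimage hemb
    (f := fun x : EuclideanSpace ℝ (Fin 3) => (‖x - p‖ ^ 4)⁻¹) (s := {x | R < ‖x - p‖})).1 ?_
  rw [show ((fun x : EuclideanSpace ℝ (Fin 3) => x + p) ⁻¹' {x | R < ‖x - p‖})
      = {x | R < ‖x‖} by ext z; simp]
  rw [show ((fun x : EuclideanSpace ℝ (Fin 3) => (‖x - p‖ ^ 4)⁻¹) ∘ fun x => x + p)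
      = fun x => (‖x‖ ^ 4)⁻¹ by funext z; simp [Function.comp]]
  exact ext_integrable0 R hR

/-- `L²` convergence, at rate `h`, of the two-electrode potential
`v^h` to the point-electrode potential `v` on the region `Ξ_R` of the lower
half-space at distance at least `R` from both electrodes. -/
theorem electrode_pair_potential_L2_estimate
    (qp qm : EuclideanSpace ℝ (Fin 2)) (hq : qp ≠ qm)
    (h R : ℝ) (hh : 0 < h) (hR : 2 * h < R)
    (vh v : EuclideanSpace ℝ (Fin 3) → ℝ)
    (hvh : ∀ x, vh x = (1 / (Real.pi * h ^ 2)) *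
      ((∫ y in Metric.ball qp h, Phi x (hat y)) - ∫ y in Metric.ball qm h, Phi x (hat y)))
    (hv : ∀ x, v x = Phi x (hat qp) - Phi x (hat qm)) :
    (∫ x in {x : EuclideanSpace ℝ (Fin 3) |
        x 2 < 0 ∧ R < ‖x - hat qp‖ ∧ R < ‖x - hat qm‖}, |vh x - v x| ^ 2) ^ ((1 : ℝ) / 2)
      ≤ 2 * h / Real.sqrt R := by
  have hπ : (0:ℝ) < π := pi_pos
  have hR0 : 0 < R := by linarith
  set Ξ : Set (EuclideanSpace ℝ (Fin 3)) :=
    {x | x 2 < 0 ∧ R < ‖x - hat qp‖ ∧ R < ‖x - hat qm‖} with hΞ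
  have hopen : IsOpen Ξ := by
    rw [hΞ, Set.setOf_and, Set.setOf_and]
    refine IsOpen.inter ?_ (IsOpen.inter ?_ ?_)
    · exact isOpen_lt (EuclideanSpace.proj (2 : Fin 3)).continuous continuous_const
    · exact isOpen_lt continuous_const ((continuous_id.sub continuous_const).norm)
    · exact isOpen_lt continuous_const ((continuous_id.sub continuous_const).norm)
  have hmeasΞ : MeasurableSet Ξ := hopen.measurableSet
  have hsubp : Ξ ⊆ {x | R < ‖x - hat qp‖} := fun x hx => hx.2.1
  have hsubm : Ξ ⊆ {x | R < ‖x - hat qm‖} := fun x hx => hx.2.2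
  set c : ℝ := h ^ 2 / (2 * π ^ 2) with hc
  set g : EuclideanSpace ℝ (Fin 3) → ℝ :=
    fun x => c * ((‖x - hat qp‖ ^ 4)⁻¹ + (‖x - hat qm‖ ^ 4)⁻¹) with hg
  have hintp := ext_integrable (hat qp) R hR0
  have hintm := ext_integrable (hat qm) R hR0
  have hintgp : IntegrableOn (fun x => (‖x - hat qp‖ ^ 4)⁻¹) Ξ := hintp.mono_set hsubp
  have hintgm : IntegrableOn (fun x => (‖x - hat qm‖ ^ 4)⁻¹) Ξ := hintm.mono_set hsubm
  have hintg : IntegrableOn g Ξ := (hintgp.add hintgm).const_mul c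
  have hpoint : ∀ x ∈ Ξ, |vh x - v x| ^ 2 ≤ g x := by
    intro x hx
    obtain ⟨hx3, hxp, hxm⟩ := hx
    have Bp := single_bound x qp h R hh hR hxp
    have Bm := single_bound x qm h R hh hR hxm
    have hap : 0 < ‖x - hat qp‖ := lt_trans (by linarith) hxp
    have ham : 0 < ‖x - hat qm‖ := lt_trans (by linarith) hxm
    have e : vh x - v x =
        ((1 / (π * h ^ 2)) * (∫ y in ball qp h, Phi x (hat y)) - Phi x (hat qp))
        - ((1 / (π * h ^ 2)) * (∫ y in ball qm h, Phi x (hat y)) - Phi x (hat qm)) := by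
      rw [hvh x, hv x]; ring
    have habs : |vh x - v x| ≤ h / (2 * π * ‖x - hat qp‖ ^ 2)
        + h / (2 * π * ‖x - hat qm‖ ^ 2) := by
      rw [e]; exact (abs_sub _ _).trans (add_le_add Bp Bm)
    set A : ℝ := h / (2 * π * ‖x - hat qp‖ ^ 2) with hA
    set B : ℝ := h / (2 * π * ‖x - hat qm‖ ^ 2) with hB
    have hsq : |vh x - v x| ^ 2 ≤ (A + B) ^ 2 :=
      pow_le_pow_left₀ (abs_nonneg _) habs 2
    have h2 : (A + B) ^ 2 ≤ 2 * A ^ 2 + 2 * B ^ 2 := by nlinarith [sq_nonneg (A - B)]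
    have hA2 : 2 * A ^ 2 = c * (‖x - hat qp‖ ^ 4)⁻¹ := by
      rw [hA, hc]; field_simp
    have hB2 : 2 * B ^ 2 = c * (‖x - hat qm‖ ^ 4)⁻¹ := by
      rw [hB, hc]; field_simp
    calc |vh x - v x| ^ 2 ≤ (A + B) ^ 2 := hsq
      _ ≤ 2 * A ^ 2 + 2 * B ^ 2 := h2
      _ = g x := by rw [hA2, hB2, hg]; ring
  have hI1 : (∫ x in Ξ, |vh x - v x| ^ 2) ≤ ∫ x in Ξ, g x :=
    integral_mono_of_nonneg (Filter.Eventually.of_forall fun x => by positivity) hintg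
      ((ae_restrict_mem hmeasΞ).mono hpoint)
  have hEgp : (∫ x in Ξ, (‖x - hat qp‖ ^ 4)⁻¹) ≤ 4 * π / R := by
    rw [← ext_int_val (hat qp) R hR0]
    exact setIntegral_mono_set hintp (Filter.Eventually.of_forall fun x => by positivity)
      (HasSubset.Subset.eventuallyLE hsubp)
  have hEgm : (∫ x in Ξ, (‖x - hat qm‖ ^ 4)⁻¹) ≤ 4 * π / R := by
    rw [← ext_int_val (hat qm) R hR0]
    exact setIntegral_mono_set hintm (Filter.Eventually.of_forall fun x => by positivity)
      (HasSubset.Subset.eventuallyLE hsubm)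
  have hEg : (∫ x in Ξ, g x) ≤ c * (8 * π / R) := by
    rw [hg]
    simp only
    rw [integral_const_mul, integral_add hintgp hintgm]
    calc c * ((∫ x in Ξ, (‖x - hat qp‖ ^ 4)⁻¹) + ∫ x in Ξ, (‖x - hat qm‖ ^ 4)⁻¹)
        ≤ c * (4 * π / R + 4 * π / R) :=
          mul_le_mul_of_nonneg_left (add_le_add hEgp hEgm) (by positivity)
      _ = c * (8 * π / R) := by ring
  have hfinal : (∫ x in Ξ, |vh x - v x| ^ 2) ≤ (2 * h / Real.sqrt R) ^ 2 := by
    have h1 : c * (8 * π / R) = 4 * h ^ 2 / (π * R) := by rw [hc]; field_simp; ring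
    have h2 : 4 * h ^ 2 / (π * R) ≤ 4 * h ^ 2 / R := by
      rw [div_le_div_iff₀ (by positivity) hR0]
      nlinarith [pi_gt_three, mul_nonneg (sq_nonneg h) hR0.le]
    have h3 : (2 * h / Real.sqrt R) ^ 2 = 4 * h ^ 2 / R := by
      rw [div_pow, Real.sq_sqrt hR0.le]; ring
    linarith
  have hI0 : 0 ≤ ∫ x in Ξ, |vh x - v x| ^ 2 :=
    integral_nonneg fun x => by positivity
  calc (∫ x in Ξ, |vh x - v x| ^ 2) ^ ((1:ℝ)/2)
      = Real.sqrt (∫ x in Ξ, |vh x - v x| ^ 2) := (Real.sqrt_eq_rpow _).symm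
    _ ≤ Real.sqrt ((2 * h / Real.sqrt R) ^ 2) := Real.sqrt_le_sqrt hfinal
    _ = 2 * h / Real.sqrt R := Real.sqrt_sq (by positivity)
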